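/- Define the backward sequence X_T = θI and X_t = Θ(X_{t+1}) for t < T. Then the sequence (X_{T−k})_{k≥0} is nondecreasing in the Loewner order and remains in the set 𝒞 = {X : θI ≤ X ≤ Σ_ρ}; consequently it converges as k → ∞ to a matrix X ∈ 𝒞 satisfying the algebraic Riccati equation X = Āᵀ(X⁻¹ − B̄B̄ᵀ)⁻¹Ā + θI. -/

import Mathlib

open Matrix

/-- Spectral radius of a real square matrix. -/
noncomputable def specRad {n : ℕ} (A : Matrix (Fin n) (Fin n) ℝ) : ℝ :=
  sSup ((fun μ => ‖μ‖) '' spectrum ℂ (A.map (Complex.ofReal)))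

/-!
For `X` in `𝒞 = [θI, Σ_ρ]`, inversion reverses the Loewner order, so
`X⁻¹ - B̄B̄ᵀ ≥ Σ_ρ⁻¹ - B̄B̄ᵀ ≥ ρ⁻²Σ_ρ⁻¹ > 0` by the hypothesis on `ρ`; inverting once more,
`(X⁻¹ - B̄B̄ᵀ)⁻¹ ≤ ρ²Σ_ρ`, hence `Θ(X) ≤ ρ²ĀᵀΣ_ρĀ + θI = Σ_ρ`. Thus `Θ` maps `𝒞` into itself and
is monotone there, so its iterates from the bottom `θI` of `𝒞` increase and stay in `𝒞`. Their
quadratic forms are monotone and bounded, so by polarization the matrices converge; the limit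
lies in the closed set `𝒞`, where `Θ` is continuous, and is therefore a fixed point of `Θ`.
-/

open Set Filter Topology
open scoped MatrixOrder ComplexOrder

namespace Matrix

variable {ι 𝕜 : Type*} [RCLike 𝕜]

theorem posDef_of_smul_one_le [DecidableEq ι] {θ : ℝ} (hθ : 0 < θ) {X : Matrix ι ι ℝ}
    (h : θ • 1 ≤ X) : X.PosDef := by
  simpa using (PosDef.one.smul hθ).add_posSemidef (le_iff.1 h)

variable [Fintype ι]

theorem isClosed_setOf_posSemidef : IsClosed {M : Matrix ι ι 𝕜 | M.PosSemidef} := by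
  simp_rw [posSemidef_iff_dotProduct_mulVec, ofPred_and, ofPred_forall]
  exact (isClosed_eq continuous_id.matrix_conjTranspose continuous_id).inter
    (isClosed_iInter fun x => isClosed_le continuous_const (by fun_prop))

instance orderClosedTopology : OrderClosedTopology (Matrix ι ι 𝕜) :=
  ⟨isClosed_setOf_posSemidef.preimage (continuous_snd.sub continuous_fst)⟩

theorem monotone_dotProduct_mulVec (v : ι → ℝ) :
    Monotone fun M : Matrix ι ι ℝ => v ⬝ᵥ M *ᵥ v := fun M N h => by
  simpa [sub_mulVec] using (le_iff.1 h).dotProduct_mulVec_nonneg v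

theorem transpose_mul_mul_le_transpose_mul_mul {κ : Type*} [Fintype κ] {M N : Matrix ι ι ℝ}
    (h : M ≤ N) (A : Matrix ι κ ℝ) : Aᵀ * M * A ≤ Aᵀ * N * A :=
  le_iff.2 <| by
    simpa [Matrix.mul_sub, Matrix.sub_mul] using (le_iff.1 h).conjTranspose_mul_mul_same A

theorem transpose_mul_mul_nonneg {κ : Type*} [Fintype κ] {M : Matrix ι ι ℝ} (h : 0 ≤ M)
    (A : Matrix ι κ ℝ) : 0 ≤ Aᵀ * M * A := by
  simpa using transpose_mul_mul_le_transpose_mul_mul h A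

variable [DecidableEq ι]

theorem PosDef.continuousAt_inv {X : Matrix ι ι 𝕜} (hX : X.PosDef) : ContinuousAt Inv.inv X :=
  continuousAt_matrix_inv X (NormedRing.inverse_continuousAt (hX.det_pos.ne'.isUnit.unit))

-- `[B 1; 1 A⁻¹]` is PSD as its Schur complement `B - A` is, hence so is its other one `A⁻¹ - B⁻¹`.
theorem PosDef.inv_anti {A B : Matrix ι ι 𝕜} (hA : A.PosDef) (hAB : A ≤ B) : B⁻¹ ≤ A⁻¹ := by
  have hB : B.PosDef := by simpa using hA.add_posSemidef hAB
  let _ := hA.isUnit.invertible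
  let _ := hB.isUnit.invertible
  let _ := hA.inv.isUnit.invertible
  have hblock : (fromBlocks B 1 1ᴴ A⁻¹).PosSemidef :=
    (PosDef.fromBlocks₂₂ B 1 hA.inv).2 (by
      simpa only [inv_inv_of_invertible, mul_one, one_mul, conjTranspose_one] using le_iff.1 hAB)
  exact le_iff.2 <| by
    simpa only [conjTranspose_one, mul_one, one_mul] using (PosDef.fromBlocks₁₁ 1 A⁻¹ hB).1 hblock

theorem IsHermitian.apply_eq_polarization {M : Matrix ι ι ℝ} (hM : M.IsHermitian) (i j : ι) :
    M i j = ((Pi.single i 1 + Pi.single j 1) ⬝ᵥ M *ᵥ (Pi.single i 1 + Pi.single j 1)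
      - Pi.single i 1 ⬝ᵥ M *ᵥ Pi.single i 1 - Pi.single j 1 ⬝ᵥ M *ᵥ Pi.single j 1) / 2 := by
  have hji : M j i = M i j := by simpa using congrFun₂ hM i j
  simp only [mulVec_add, dotProduct_add, add_dotProduct, mulVec_single_one, single_dotProduct,
    one_mul, col_apply, hji]
  ring

theorem exists_tendsto_of_monotone_of_le {Y : ℕ → Matrix ι ι ℝ} {S : Matrix ι ι ℝ}
    (hY : Monotone Y) (hS : ∀ k, Y k ≤ S) (h0 : (Y 0).IsHermitian) :
    ∃ X, Tendsto Y atTop (𝓝 X) := by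
  have hherm k : (Y k).IsHermitian := by
    simpa using h0.add (le_iff.1 (hY (Nat.zero_le k))).isHermitian
  have hquad v : ∃ L, Tendsto (fun k => v ⬝ᵥ Y k *ᵥ v) atTop (𝓝 L) :=
    ⟨_, tendsto_atTop_ciSup ((monotone_dotProduct_mulVec v).comp hY)
      ⟨v ⬝ᵥ S *ᵥ v, forall_mem_range.2 fun k => monotone_dotProduct_mulVec v (hS k)⟩⟩
  have hentry i j : ∃ L, Tendsto (fun k => Y k i j) atTop (𝓝 L) := by
    obtain ⟨L₁, h₁⟩ := hquad (Pi.single i 1 + Pi.single j 1)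
    obtain ⟨L₂, h₂⟩ := hquad (Pi.single i 1)
    obtain ⟨L₃, h₃⟩ := hquad (Pi.single j 1)
    exact ⟨_, (((h₁.sub h₂).sub h₃).div_const 2).congr
      fun k => ((hherm k).apply_eq_polarization i j).symm⟩
  choose L hL using hentry
  exact ⟨of L, tendsto_pi_nhds.2 fun i => tendsto_pi_nhds.2 (hL i)⟩

end Matrix

theorem Set.MapsTo.iterate_mem_Icc_and_monotone {α : Type*} [Preorder α] {f : α → α}
    {a b : α} (hf : MapsTo f (Icc a b) (Icc a b)) (hmono : MonotoneOn f (Icc a b))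
    (hab : a ≤ b) :
    (∀ k, f^[k] a ∈ Icc a b) ∧ Monotone fun k => f^[k] a := by
  have hmem k : f^[k] a ∈ Icc a b := by
    induction k with
    | zero => exact ⟨le_rfl, hab⟩
    | succ k ih => rw [Function.iterate_succ_apply']; exact hf ih
  refine ⟨hmem, monotone_nat_of_le_succ fun k => ?_⟩
  induction k with
  | zero => exact (hmem 1).1
  | succ k ih =>
    simpa only [Function.iterate_succ_apply'] using hmono (hmem k) (hmem (k + 1)) ih

section Riccati

variable {ι κ : Type*} [Fintype ι] [DecidableEq ι] [Fintype κ]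

noncomputable def riccatiMap (A : Matrix ι ι ℝ) (B : Matrix ι κ ℝ) (θ : ℝ) (X : Matrix ι ι ℝ) :
    Matrix ι ι ℝ :=
  Aᵀ * (X⁻¹ - B * Bᵀ)⁻¹ * A + θ • 1

variable {A : Matrix ι ι ℝ} {B : Matrix ι κ ℝ} {ρ θ : ℝ} {S X : Matrix ι ι ℝ}

theorem smul_inv_le_inv_sub_mul_transpose (hB : B * Bᵀ ≤ (1 - ρ⁻¹ ^ 2) • S⁻¹) (hX : X.PosDef)
    (hXS : X ≤ S) : ρ⁻¹ ^ 2 • S⁻¹ ≤ X⁻¹ - B * Bᵀ :=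
  calc ρ⁻¹ ^ 2 • S⁻¹ = S⁻¹ - (1 - ρ⁻¹ ^ 2) • S⁻¹ := by rw [sub_smul, one_smul, sub_sub_cancel]
    _ ≤ X⁻¹ - B * Bᵀ := sub_le_sub (hX.inv_anti hXS) hB

theorem posDef_inv_sub_mul_transpose (hρ : ρ ≠ 0) (hS : S.PosDef)
    (hB : B * Bᵀ ≤ (1 - ρ⁻¹ ^ 2) • S⁻¹) (hX : X.PosDef) (hXS : X ≤ S) :
    (X⁻¹ - B * Bᵀ).PosDef := by
  simpa using (hS.inv.smul (by positivity : 0 < ρ⁻¹ ^ 2)).add_posSemidef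
    (le_iff.1 (smul_inv_le_inv_sub_mul_transpose hB hX hXS))

theorem inv_inv_sub_mul_transpose_le (hρ : ρ ≠ 0) (hS : S.PosDef)
    (hB : B * Bᵀ ≤ (1 - ρ⁻¹ ^ 2) • S⁻¹) (hX : X.PosDef) (hXS : X ≤ S) :
    (X⁻¹ - B * Bᵀ)⁻¹ ≤ ρ ^ 2 • S := by
  have hle := ((hS.inv.smul (by positivity : 0 < ρ⁻¹ ^ 2)).inv_anti
    (smul_inv_le_inv_sub_mul_transpose hB hX hXS))
  have hinv : (ρ⁻¹ ^ 2 • S⁻¹)⁻¹ = ρ ^ 2 • S := inv_eq_left_inv <| by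
    rw [smul_mul_smul_comm, mul_nonsing_inv _ hS.det_pos.ne'.isUnit, ← mul_pow,
      mul_inv_cancel₀ hρ, one_pow, one_smul]
  rwa [hinv] at hle

theorem smul_one_le_of_eq_lyapunov (hS : S = ρ ^ 2 • (Aᵀ * S * A) + θ • 1) (hSpd : S.PosDef) :
    θ • 1 ≤ S :=
  calc θ • 1 ≤ ρ ^ 2 • (Aᵀ * S * A) + θ • 1 :=
        le_add_of_nonneg_left (smul_nonneg (sq_nonneg ρ)
          (transpose_mul_mul_nonneg (nonneg_iff_posSemidef.2 hSpd.posSemidef) A))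
    _ = S := hS.symm

theorem riccatiMap_mapsTo (hρ : ρ ≠ 0) (hθ : 0 < θ) (hSpd : S.PosDef)
    (hB : B * Bᵀ ≤ (1 - ρ⁻¹ ^ 2) • S⁻¹) (hS : S = ρ ^ 2 • (Aᵀ * S * A) + θ • 1) :
    MapsTo (riccatiMap A B θ) (Icc (θ • 1) S) (Icc (θ • 1) S) := by
  rintro X ⟨hθX, hXS⟩
  have hX := posDef_of_smul_one_le hθ hθX
  have hW := posDef_inv_sub_mul_transpose hρ hSpd hB hX hXS
  rw [mem_Icc, riccatiMap]
  refine ⟨le_add_of_nonneg_left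
    (transpose_mul_mul_nonneg (nonneg_iff_posSemidef.2 hW.inv.posSemidef) A), ?_⟩
  calc Aᵀ * (X⁻¹ - B * Bᵀ)⁻¹ * A + θ • 1 ≤ Aᵀ * (ρ ^ 2 • S) * A + θ • 1 :=
        add_le_add (transpose_mul_mul_le_transpose_mul_mul
          (inv_inv_sub_mul_transpose_le hρ hSpd hB hX hXS) A) le_rfl
    _ = S := by rw [Matrix.mul_smul, Matrix.smul_mul, ← hS]

theorem riccatiMap_monotoneOn (hρ : ρ ≠ 0) (hθ : 0 < θ) (hSpd : S.PosDef)
    (hB : B * Bᵀ ≤ (1 - ρ⁻¹ ^ 2) • S⁻¹) : MonotoneOn (riccatiMap A B θ) (Icc (θ • 1) S) := by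
  rintro X ⟨hθX, hXS⟩ X' ⟨hθX', hX'S⟩ hXX'
  have hX' := posDef_of_smul_one_le hθ hθX'
  have hW' := posDef_inv_sub_mul_transpose hρ hSpd hB hX' hX'S
  have hWW' : X'⁻¹ - B * Bᵀ ≤ X⁻¹ - B * Bᵀ :=
    sub_le_sub_right ((posDef_of_smul_one_le hθ hθX).inv_anti hXX') _
  exact add_le_add (transpose_mul_mul_le_transpose_mul_mul (hW'.inv_anti hWW') A) le_rfl

theorem continuousAt_riccatiMap (hρ : ρ ≠ 0) (hθ : 0 < θ) (hSpd : S.PosDef)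
    (hB : B * Bᵀ ≤ (1 - ρ⁻¹ ^ 2) • S⁻¹) (hXmem : X ∈ Icc (θ • 1) S) :
    ContinuousAt (riccatiMap A B θ) X := by
  have hX := posDef_of_smul_one_le hθ hXmem.1
  have hW := posDef_inv_sub_mul_transpose hρ hSpd hB hX hXmem.2
  have hinner : ContinuousAt (fun Y => (Y⁻¹ - B * Bᵀ)⁻¹) X :=
    hW.continuousAt_inv.comp (f := fun Y => Y⁻¹ - B * Bᵀ)
      (hX.continuousAt_inv.sub continuousAt_const)
  exact ((continuousAt_const.mul hinner).mul continuousAt_const).add continuousAt_const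

end Riccati

theorem stmt_7_general {n m : ℕ} (Abar : Matrix (Fin n) (Fin n) ℝ)
    (Bbar : Matrix (Fin n) (Fin m) ℝ) (ρ θ : ℝ) (hρ : 1 < ρ) (hθ : 0 < θ)
    (Sρ : Matrix (Fin n) (Fin n) ℝ)
    (hS : Sρ = (ρ ^ 2) • (Abarᵀ * Sρ * Abar) + θ • (1 : Matrix (Fin n) (Fin n) ℝ))
    (hSpd : Sρ.PosDef)
    (hcond : ((1 - ρ⁻¹ ^ 2) • Sρ⁻¹ - Bbar * Bbarᵀ).PosSemidef)
    (Y : ℕ → Matrix (Fin n) (Fin n) ℝ)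
    (hY0 : Y 0 = θ • (1 : Matrix (Fin n) (Fin n) ℝ))
    (hYrec : ∀ k : ℕ, Y (k + 1) =
      Abarᵀ * ((Y k)⁻¹ - Bbar * Bbarᵀ)⁻¹ * Abar + θ • (1 : Matrix (Fin n) (Fin n) ℝ)) :
    (∀ k : ℕ, (Y k - θ • (1 : Matrix (Fin n) (Fin n) ℝ)).PosSemidef ∧
      (Sρ - Y k).PosSemidef) ∧
    (∀ k : ℕ, (Y (k + 1) - Y k).PosSemidef) ∧
    ∃ X : Matrix (Fin n) (Fin n) ℝ,
      Filter.Tendsto Y Filter.atTop (nhds X) ∧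
      (X - θ • (1 : Matrix (Fin n) (Fin n) ℝ)).PosSemidef ∧
      (Sρ - X).PosSemidef ∧
      X = Abarᵀ * (X⁻¹ - Bbar * Bbarᵀ)⁻¹ * Abar + θ • (1 : Matrix (Fin n) (Fin n) ℝ) := by
  have hρ0 : ρ ≠ 0 := (zero_lt_one.trans hρ).ne'
  have hB : Bbar * Bbarᵀ ≤ (1 - ρ⁻¹ ^ 2) • Sρ⁻¹ := le_iff.2 hcond
  have hY : Y = fun k => (riccatiMap Abar Bbar θ)^[k] (θ • 1) := by
    funext k
    induction k with
    | zero => exact hY0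
    | succ k ih => rw [Function.iterate_succ_apply', ← ih, hYrec, riccatiMap]
  subst hY
  obtain ⟨hmem, hmono⟩ := (riccatiMap_mapsTo hρ0 hθ hSpd hB hS).iterate_mem_Icc_and_monotone
    (riccatiMap_monotoneOn hρ0 hθ hSpd hB) (smul_one_le_of_eq_lyapunov hS hSpd)
  obtain ⟨X, hX⟩ := exists_tendsto_of_monotone_of_le hmono (fun k => (hmem k).2)
    (isHermitian_one.smul (IsSelfAdjoint.all θ))
  have hXmem : X ∈ Icc (θ • 1) Sρ := isClosed_Icc.mem_of_tendsto hX (Eventually.of_forall hmem)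
  have hfix : Function.IsFixedPt (riccatiMap Abar Bbar θ) X := isFixedPt_of_tendsto_iterate hX
    (continuousAt_riccatiMap hρ0 hθ hSpd hB hXmem)
  exact ⟨hmem, fun k => hmono k.le_succ, X, hX, hXmem.1, hXmem.2, hfix.symm⟩

/-- The backward sequence `X_T = θI`, `X_t = Θ(X_{t+1})`
(reindexed as `Y k := X_{T-k}`, so `Y 0 = θI` and `Y (k+1) = Θ (Y k)`) is
nondecreasing in the Loewner order, stays in `𝒞 = {X : θI ≤ X ≤ Σ_ρ}`, and
converges to a matrix `X ∈ 𝒞` solving the algebraic Riccati equation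
`X = Āᵀ (X⁻¹ - B̄B̄ᵀ)⁻¹ Ā + θ I`. -/
theorem stmt_7 {n m : ℕ} (Abar : Matrix (Fin n) (Fin n) ℝ)
    (Bbar : Matrix (Fin n) (Fin m) ℝ) (hBB : (Bbar * Bbarᵀ).PosDef)
    (hA : specRad Abar < 1) (ρ θ : ℝ) (hρ : 1 < ρ)
    (hρA : ρ * specRad Abar < 1) (hθ : 0 < θ)
    (Sρ : Matrix (Fin n) (Fin n) ℝ)
    (hS : Sρ = (ρ ^ 2) • (Abarᵀ * Sρ * Abar) + θ • (1 : Matrix (Fin n) (Fin n) ℝ))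
    (hSpd : Sρ.PosDef)
    (hcond : ((1 - ρ⁻¹ ^ 2) • Sρ⁻¹ - Bbar * Bbarᵀ).PosSemidef)
    (Y : ℕ → Matrix (Fin n) (Fin n) ℝ)
    (hY0 : Y 0 = θ • (1 : Matrix (Fin n) (Fin n) ℝ))
    (hYrec : ∀ k : ℕ, Y (k + 1) =
      Abarᵀ * ((Y k)⁻¹ - Bbar * Bbarᵀ)⁻¹ * Abar + θ • (1 : Matrix (Fin n) (Fin n) ℝ)) :
    (∀ k : ℕ, (Y k - θ • (1 : Matrix (Fin n) (Fin n) ℝ)).PosSemidef ∧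
      (Sρ - Y k).PosSemidef) ∧
    (∀ k : ℕ, (Y (k + 1) - Y k).PosSemidef) ∧
    ∃ X : Matrix (Fin n) (Fin n) ℝ,
      Filter.Tendsto Y Filter.atTop (nhds X) ∧
      (X - θ • (1 : Matrix (Fin n) (Fin n) ℝ)).PosSemidef ∧
      (Sρ - X).PosSemidef ∧
      X = Abarᵀ * (X⁻¹ - Bbar * Bbarᵀ)⁻¹ * Abar + θ • (1 : Matrix (Fin n) (Fin n) ℝ) :=
  stmt_7_general Abar Bbar ρ θ hρ hθ Sρ hS hSpd hcond Y hY0 hYrec
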